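/- arXiv:2302.14563 — 7 statements merged into one kernel-verified Lean document; each statement's English description precedes it below -/
import Mathlib

section
/- Let n ≥ 2 be a natural number and c > 0 a real number. Let m, r, d : ℕ → ℝ be sequences such that for every j with 1 ≤ j ≤ n − 1 the recursion m(j) = (m(j+1) + r(j))·exp(d(j)/c) holds. Then m(1) = m(n)·exp((Σ_{j=1}^{n−1} d(j))/c) + Σ_{j=1}^{n−1} r(j)·exp((Σ_{k=1}^{j} d(k))/c). -/
/-- Closed-form solution of the servicer-mass recursion: if
`m j = (m (j+1) + r j) * exp (d j / c)` for all `1 ≤ j ≤ n - 1`, then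
`m 1 = m n * exp ((∑_{j=1}^{n-1} d j)/c) + ∑_{j=1}^{n-1} r j * exp ((∑_{k=1}^{j} d k)/c)`. -/
theorem stmt_0 (n : ℕ) (hn : 2 ≤ n) (c : ℝ) (hc : 0 < c)
    (m r d : ℕ → ℝ)
    (hrec : ∀ j : ℕ, 1 ≤ j → j ≤ n - 1 →
      m j = (m (j + 1) + r j) * Real.exp (d j / c)) :
    m 1 = m n * Real.exp ((∑ j ∈ Finset.Icc 1 (n - 1), d j) / c) +
      ∑ j ∈ Finset.Icc 1 (n - 1),
        r j * Real.exp ((∑ k ∈ Finset.Icc 1 j, d k) / c) := by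
  induction n with
  | zero => omega
  | succ n ih =>
    rcases Nat.lt_or_ge n 2 with h2 | h2
    · -- n + 1 = 2, i.e. n = 1
      interval_cases n
      · omega
      · have h := hrec 1 le_rfl (by norm_num)
        simp [h]; ring
    · -- n ≥ 2
      have ihn := ih h2 (fun j hj1 hj2 => hrec j hj1 (by omega))
      have hstep := hrec n (by omega) (by omega)
      have hIcc : Finset.Icc 1 (n + 1 - 1) = insert n (Finset.Icc 1 (n - 1)) := by
        have : n + 1 - 1 = n := rfl
        rw [this]
        have : Finset.Icc 1 n = Finset.Icc 1 (n - 1) ∪ {n} := by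
          rw [Finset.union_comm]
          ext x
          simp [Finset.mem_Icc]
          omega
        rw [this, Finset.union_comm]
        rw [Finset.insert_eq]
      have hnmem : n ∉ Finset.Icc 1 (n - 1) := by
        simp [Finset.mem_Icc]; omega
      rw [hIcc, Finset.sum_insert hnmem, Finset.sum_insert hnmem]
      rw [ihn, hstep]
      have key : ∀ a b : ℝ, Real.exp (a / c) * Real.exp (b / c)
          = Real.exp ((a + b) / c) := by
        intro a b
        rw [← Real.exp_add, ← add_div]
      have hIccn : Finset.Icc 1 n = insert n (Finset.Icc 1 (n - 1)) := by
        ext x; simp [Finset.mem_Icc]; omega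
      rw [hIccn, Finset.sum_insert hnmem]
      rw [add_div, Real.exp_add]
      ring
end

section
/- Let n ≥ 1 be a natural number and c > 0 a real number. Let m0, mf, d : ℕ → ℝ and r : ℕ → ℝ be sequences such that m0(j) = mf(j)·exp(d(j)/c) for every j with 1 ≤ j ≤ n + 1, and m0(j+1) = mf(j) − r(j) for every j with 1 ≤ j ≤ n. Then m0(1) = mf(n+1)·exp((Σ_{j=1}^{n+1} d(j))/c) + Σ_{j=1}^{n} r(j)·exp((Σ_{k=1}^{j} d(k))/c). -/
/-!
Eliminating `mf j` between the rocket equation and mass conservation gives the affine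
recurrence `m0 j = (m0 (j + 1) + r j) * exp (d j / c)`; unrolling it from the last transfer
back to the first, each refuel mass is weighted by the product of the exponential factors of
the transfers before it, and that product is the exponential of the partial sum of the `Δv`s.
-/

open Finset

theorem eq_mul_prod_add_sum_of_eq_add_mul {R : Type*} [CommSemiring R] (x r a : ℕ → R) (n : ℕ)
    (h : ∀ j, 1 ≤ j → j ≤ n → x j = (x (j + 1) + r j) * a j) :
    x 1 = x (n + 1) * ∏ k ∈ Icc 1 n, a k + ∑ j ∈ Icc 1 n, r j * ∏ k ∈ Icc 1 j, a k := by
  induction n with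
  | zero => simp
  | succ n ih =>
    rw [ih fun j hj hjn => h j hj (by omega), h (n + 1) (by omega) le_rfl,
      sum_Icc_succ_top (by omega), prod_Icc_succ_top (by omega)]
    ring

theorem stmt_1_general (n : ℕ) (c : ℝ)
    (m0 mf d r : ℕ → ℝ)
    (hrocket : ∀ j : ℕ, 1 ≤ j → j ≤ n + 1 → m0 j = mf j * Real.exp (d j / c))
    (hmass : ∀ j : ℕ, 1 ≤ j → j ≤ n → m0 (j + 1) = mf j - r j) :
    m0 1 = mf (n + 1) * Real.exp ((∑ j ∈ Finset.Icc 1 (n + 1), d j) / c) +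
      ∑ j ∈ Finset.Icc 1 n,
        r j * Real.exp ((∑ k ∈ Finset.Icc 1 j, d k) / c) := by
  have hstep : ∀ j, 1 ≤ j → j ≤ n → m0 j = (m0 (j + 1) + r j) * Real.exp (d j / c) := by
    intro j hj hjn
    rw [hrocket j hj (by omega), hmass j hj hjn]
    ring
  have hexp_sum : ∀ j,
      Real.exp ((∑ k ∈ Icc 1 j, d k) / c) = ∏ k ∈ Icc 1 j, Real.exp (d k / c) := fun j => by
    rw [sum_div, Real.exp_sum]
  rw [eq_mul_prod_add_sum_of_eq_add_mul m0 r _ n hstep, hrocket (n + 1) (by omega) le_rfl]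
  simp only [hexp_sum, prod_Icc_succ_top (by omega : 1 ≤ n + 1)]
  ring

/-- Initial (wet) servicer mass in terms of final (dry) mass and refuel masses:
from the rocket equations `m0 j = mf j * exp (d j / c)` for `1 ≤ j ≤ n + 1` and
mass conservation `m0 (j+1) = mf j - r j` for `1 ≤ j ≤ n`, one gets
`m0 1 = mf (n+1) * exp ((∑_{j=1}^{n+1} d j)/c) + ∑_{j=1}^{n} r j * exp ((∑_{k=1}^{j} d k)/c)`. -/
theorem stmt_1 (n : ℕ) (hn : 1 ≤ n) (c : ℝ) (hc : 0 < c)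
    (m0 mf d r : ℕ → ℝ)
    (hrocket : ∀ j : ℕ, 1 ≤ j → j ≤ n + 1 → m0 j = mf j * Real.exp (d j / c))
    (hmass : ∀ j : ℕ, 1 ≤ j → j ≤ n → m0 (j + 1) = mf j - r j) :
    m0 1 = mf (n + 1) * Real.exp ((∑ j ∈ Finset.Icc 1 (n + 1), d j) / c) +
      ∑ j ∈ Finset.Icc 1 n,
        r j * Real.exp ((∑ k ∈ Finset.Icc 1 j, d k) / c) :=
  stmt_1_general n c m0 mf d r hrocket hmass
end

section
/- Let n ≥ 1 be a natural number, g0 > 0, Isp_s > 0, Isp_t > 0 real numbers. Let Δv_s : ℕ → ℝ, and for each j with 1 ≤ j ≤ n let m_tin0(j), m_req(j), Δv_tin(j), Δv_tout(j) be real numbers. Let m_s0, m_sf : ℕ → ℝ satisfy m_s0(j) = m_sf(j)·exp(Δv_s(j)/(Isp_s·g0)) for 1 ≤ j ≤ n + 1, and m_s0(j+1) = m_sf(j) − m_r(j) for 1 ≤ j ≤ n, where m_r(j) := (m_tin0(j) + m_req(j))·exp(Δv_tout(j)/(Isp_t·g0)) − m_tin0(j)·exp(−Δv_tin(j)/(Isp_t·g0)).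 Then m_s0(1) = m_sf(n+1)·exp((Σ_{j=1}^{n+1} Δv_s(j))/(Isp_s·g0)) + Σ_{j=1}^{n} [(m_tin0(j) + m_req(j))·exp(Δv_tout(j)/(Isp_t·g0)) − m_tin0(j)·exp(−Δv_tin(j)/(Isp_t·g0))]·exp((Σ_{k=1}^{j} Δv_s(k))/(Isp_s·g0)). -/
/-!
Each burn multiplies the servicer mass by its rocket-equation factor and each delivery subtracts
a refuel mass, so the masses satisfy an affine recurrence. Unwinding it backwards from the final
dry mass, every refuel mass picks up the factors of the burns preceding its delivery; as the
factors are exponentials, their products are exponentials of partial sums of the Δv's.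
-/

theorem head_eq_mul_prod_add_sum_of_recurrence {R : Type*} [CommRing R] (n : ℕ)
    (s f a r : ℕ → R)
    (hs : ∀ j, 1 ≤ j → j ≤ n + 1 → s j = f j * a j)
    (hf : ∀ j, 1 ≤ j → j ≤ n → f j = s (j + 1) + r j) :
    s 1 = f (n + 1) * ∏ j ∈ Finset.Icc 1 (n + 1), a j +
      ∑ j ∈ Finset.Icc 1 n, r j * ∏ k ∈ Finset.Icc 1 j, a k := by
  induction n with
  | zero => simp [hs 1 le_rfl le_rfl]
  | succ n ih =>
    have hprev := ih (fun j h1 h2 => hs j h1 (by omega)) (fun j h1 h2 => hf j h1 (by omega))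
    have hstep : f (n + 1) = f (n + 2) * a (n + 2) + r (n + 1) := by
      rw [hf (n + 1) (by omega) le_rfl, hs (n + 2) (by omega) le_rfl]
    rw [hprev, hstep, Finset.prod_Icc_succ_top (by omega : 1 ≤ n + 2),
      Finset.sum_Icc_succ_top (by omega : 1 ≤ n + 1)]
    ring

theorem stmt_5_general (n : ℕ) (g0 Isp_s Isp_t : ℝ)
    (Δv_s m_tin0 m_req Δv_tin Δv_tout : ℕ → ℝ)
    (m_s0 m_sf : ℕ → ℝ)
    (hrocket : ∀ j : ℕ, 1 ≤ j → j ≤ n + 1 →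
      m_s0 j = m_sf j * Real.exp (Δv_s j / (Isp_s * g0)))
    (hmass : ∀ j : ℕ, 1 ≤ j → j ≤ n →
      m_s0 (j + 1) = m_sf j -
        ((m_tin0 j + m_req j) * Real.exp (Δv_tout j / (Isp_t * g0)) -
          m_tin0 j * Real.exp (-Δv_tin j / (Isp_t * g0)))) :
    m_s0 1 = m_sf (n + 1) *
        Real.exp ((∑ j ∈ Finset.Icc 1 (n + 1), Δv_s j) / (Isp_s * g0)) +
      ∑ j ∈ Finset.Icc 1 n,
        ((m_tin0 j + m_req j) * Real.exp (Δv_tout j / (Isp_t * g0)) -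
          m_tin0 j * Real.exp (-Δv_tin j / (Isp_t * g0))) *
          Real.exp ((∑ k ∈ Finset.Icc 1 j, Δv_s k) / (Isp_s * g0)) := by
  simp only [Finset.sum_div, Real.exp_sum]
  exact head_eq_mul_prod_add_sum_of_recurrence n m_s0 m_sf _ _ hrocket
    fun j h1 h2 => by rw [hmass j h1 h2]; ring

/-- Closed-form initial (wet) servicer mass in the cooperative multi-target refueling
architecture with `n` targets plus a return transfer. -/
theorem stmt_5 (n : ℕ) (hn : 1 ≤ n) (g0 Isp_s Isp_t : ℝ)
    (hg0 : 0 < g0) (hIsps : 0 < Isp_s) (hIspt : 0 < Isp_t)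
    (Δv_s m_tin0 m_req Δv_tin Δv_tout : ℕ → ℝ)
    (m_s0 m_sf : ℕ → ℝ)
    (hrocket : ∀ j : ℕ, 1 ≤ j → j ≤ n + 1 →
      m_s0 j = m_sf j * Real.exp (Δv_s j / (Isp_s * g0)))
    (hmass : ∀ j : ℕ, 1 ≤ j → j ≤ n →
      m_s0 (j + 1) = m_sf j -
        ((m_tin0 j + m_req j) * Real.exp (Δv_tout j / (Isp_t * g0)) -
          m_tin0 j * Real.exp (-Δv_tin j / (Isp_t * g0)))) :
    m_s0 1 = m_sf (n + 1) *
        Real.exp ((∑ j ∈ Finset.Icc 1 (n + 1), Δv_s j) / (Isp_s * g0)) +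
      ∑ j ∈ Finset.Icc 1 n,
        ((m_tin0 j + m_req j) * Real.exp (Δv_tout j / (Isp_t * g0)) -
          m_tin0 j * Real.exp (-Δv_tin j / (Isp_t * g0))) *
          Real.exp ((∑ k ∈ Finset.Icc 1 j, Δv_s k) / (Isp_s * g0)) :=
  stmt_5_general n g0 Isp_s Isp_t Δv_s m_tin0 m_req Δv_tin Δv_tout m_s0 m_sf hrocket hmass
end

section
/- With the definitions below, m_tI > 0, and Σ_{j=1}^{n+1} Δv_sc(j) ≠ Σ_{j=1}^{n+1} Δv_sn(j), the equality m_sIc = m_sIn holds if and only if m_sF/m_tI = α, where α := [Σ_{j=1}^{n} {(m_req/m_tI)·exp((Σ_{k=1}^{j} Δv_sn(k))/(Isp_s·g0)) − ((1 + m_req/m_tI)·exp(Δv_tout(j)/(Isp_t·g0)) − exp(−Δv_tin(j)/(Isp_t·g0)))·exp((Σ_{k=1}^{j} Δv_sc(k))/(Isp_s·g0))}] / [exp((Σ_{j=1}^{n+1} Δv_sc(j))/(Isp_s·g0)) − exp((Σ_{j=1}^{n+1} Δv_sn(j))/(Isp_s·g0))]. -/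
/-! Both initial masses are affine in the dry servicer mass `m_sF`, with slopes the two total
servicer mass ratios `exp (Σ Δv / (Isp_s g0))`. These slopes differ because the total `Δv`'s do,
so the two affine functions agree at exactly one point, and solving for it gives `α`. -/

lemma mul_add_eq_mul_add_iff_div_eq {K : Type*} [Field K] {m t a b c d : K} (ht : t ≠ 0)
    (hcd : c ≠ d) : m * c + b = m * d + a ↔ m / t = (a - b) / t / (c - d) := by
  rw [div_right_comm, div_left_inj' ht, eq_div_iff (sub_ne_zero.2 hcd)]
  constructor <;> intro h <;> linear_combination h

lemma sum_critical_numerator_eq_div {ι K : Type*} [Field K] (s : Finset ι) {t : K} (ht : t ≠ 0)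
    (r : K) (x y z w : ι → K) :
    ∑ j ∈ s, (r / t * x j - ((1 + r / t) * y j - z j) * w j) =
      (∑ j ∈ s, r * x j - ∑ j ∈ s, ((t + r) * y j - t * z j) * w j) / t := by
  rw [← Finset.sum_sub_distrib, Finset.sum_div]
  refine Finset.sum_congr rfl fun j _ => ?_
  field_simp

lemma Real.exp_div_ne_exp_div {a b c : ℝ} (hab : a ≠ b) (hc : c ≠ 0) :
    Real.exp (a / c) ≠ Real.exp (b / c) :=
  Real.exp_injective.ne fun h => hab ((div_left_inj' hc).1 h)

theorem stmt_7_general (n : ℕ)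
    (g0 Isp_s Isp_t m_sF m_tI m_req : ℝ)
    (hg0 : 0 < g0) (hIsps : 0 < Isp_s) (htI : 0 < m_tI)
    (Δv_sn Δv_sc Δv_tin Δv_tout : ℕ → ℝ)
    (hne : (∑ j ∈ Finset.Icc 1 (n + 1), Δv_sc j) ≠
      (∑ j ∈ Finset.Icc 1 (n + 1), Δv_sn j))
    (m_sIn m_sIc α : ℝ)
    (hIn : m_sIn = m_sF *
        Real.exp ((∑ j ∈ Finset.Icc 1 (n + 1), Δv_sn j) / (Isp_s * g0)) +
      ∑ j ∈ Finset.Icc 1 n,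
        m_req * Real.exp ((∑ k ∈ Finset.Icc 1 j, Δv_sn k) / (Isp_s * g0)))
    (hIc : m_sIc = m_sF *
        Real.exp ((∑ j ∈ Finset.Icc 1 (n + 1), Δv_sc j) / (Isp_s * g0)) +
      ∑ j ∈ Finset.Icc 1 n,
        ((m_tI + m_req) * Real.exp (Δv_tout j / (Isp_t * g0)) -
          m_tI * Real.exp (-Δv_tin j / (Isp_t * g0))) *
          Real.exp ((∑ k ∈ Finset.Icc 1 j, Δv_sc k) / (Isp_s * g0)))
    (hα : α =
      (∑ j ∈ Finset.Icc 1 n,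
        ((m_req / m_tI) *
            Real.exp ((∑ k ∈ Finset.Icc 1 j, Δv_sn k) / (Isp_s * g0)) -
          ((1 + m_req / m_tI) * Real.exp (Δv_tout j / (Isp_t * g0)) -
              Real.exp (-Δv_tin j / (Isp_t * g0))) *
            Real.exp ((∑ k ∈ Finset.Icc 1 j, Δv_sc k) / (Isp_s * g0)))) /
      (Real.exp ((∑ j ∈ Finset.Icc 1 (n + 1), Δv_sc j) / (Isp_s * g0)) -
        Real.exp ((∑ j ∈ Finset.Icc 1 (n + 1), Δv_sn j) / (Isp_s * g0)))) :
    m_sIc = m_sIn ↔ m_sF / m_tI = α := by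
  subst hIn hIc hα
  rw [sum_critical_numerator_eq_div _ htI.ne']
  exact mul_add_eq_mul_add_iff_div_eq htI.ne' (Real.exp_div_ne_exp_div hne (by positivity))

/-- The cooperative and non-cooperative architectures require the same initial servicer
mass exactly when the dry-servicer to initial-target mass ratio equals the critical mass
ratio α (assuming the total servicer Δv's differ between the two architectures). -/
theorem stmt_7 (n : ℕ) (hn : 1 ≤ n)
    (g0 Isp_s Isp_t m_sF m_tI m_req : ℝ)
    (hg0 : 0 < g0) (hIsps : 0 < Isp_s) (hIspt : 0 < Isp_t) (htI : 0 < m_tI)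
    (Δv_sn Δv_sc Δv_tin Δv_tout : ℕ → ℝ)
    (hne : (∑ j ∈ Finset.Icc 1 (n + 1), Δv_sc j) ≠
      (∑ j ∈ Finset.Icc 1 (n + 1), Δv_sn j))
    (m_sIn m_sIc α : ℝ)
    (hIn : m_sIn = m_sF *
        Real.exp ((∑ j ∈ Finset.Icc 1 (n + 1), Δv_sn j) / (Isp_s * g0)) +
      ∑ j ∈ Finset.Icc 1 n,
        m_req * Real.exp ((∑ k ∈ Finset.Icc 1 j, Δv_sn k) / (Isp_s * g0)))
    (hIc : m_sIc = m_sF *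
        Real.exp ((∑ j ∈ Finset.Icc 1 (n + 1), Δv_sc j) / (Isp_s * g0)) +
      ∑ j ∈ Finset.Icc 1 n,
        ((m_tI + m_req) * Real.exp (Δv_tout j / (Isp_t * g0)) -
          m_tI * Real.exp (-Δv_tin j / (Isp_t * g0))) *
          Real.exp ((∑ k ∈ Finset.Icc 1 j, Δv_sc k) / (Isp_s * g0)))
    (hα : α =
      (∑ j ∈ Finset.Icc 1 n,
        ((m_req / m_tI) *
            Real.exp ((∑ k ∈ Finset.Icc 1 j, Δv_sn k) / (Isp_s * g0)) -
          ((1 + m_req / m_tI) * Real.exp (Δv_tout j / (Isp_t * g0)) -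
              Real.exp (-Δv_tin j / (Isp_t * g0))) *
            Real.exp ((∑ k ∈ Finset.Icc 1 j, Δv_sc k) / (Isp_s * g0)))) /
      (Real.exp ((∑ j ∈ Finset.Icc 1 (n + 1), Δv_sc j) / (Isp_s * g0)) -
        Real.exp ((∑ j ∈ Finset.Icc 1 (n + 1), Δv_sn j) / (Isp_s * g0)))) :
    m_sIc = m_sIn ↔ m_sF / m_tI = α :=
  stmt_7_general n g0 Isp_s Isp_t m_sF m_tI m_req hg0 hIsps htI Δv_sn Δv_sc Δv_tin Δv_tout hne m_sIn
    m_sIc α hIn hIc hα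
end

section
/- With the definitions below, m_tI > 0, and Σ_{j=1}^{n+1} Δv_sc(j) < Σ_{j=1}^{n+1} Δv_sn(j), the inequality m_sIc ≤ m_sIn holds if and only if m_sF/m_tI ≥ α, where α := [Σ_{j=1}^{n} {(m_req/m_tI)·exp((Σ_{k=1}^{j} Δv_sn(k))/(Isp_s·g0)) − ((1 + m_req/m_tI)·exp(Δv_tout(j)/(Isp_t·g0)) − exp(−Δv_tin(j)/(Isp_t·g0)))·exp((Σ_{k=1}^{j} Δv_sc(k))/(Isp_s·g0))}] / [exp((Σ_{j=1}^{n+1} Δv_sc(j))/(Isp_s·g0)) − exp((Σ_{j=1}^{n+1} Δv_sn(j))/(Isp_s·g0))]. -/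
/-! Both initial masses are affine in the dry mass `m_sF`, with slopes the exponentials of the total
servicer Δv. Comparing them is thus a linear inequality in `m_sF` whose leading coefficient
`exp (Δv_sc / c) - exp (Δv_sn / c)` is negative; dividing by it (which flips the inequality) and by
`m_tI` gives the critical ratio. -/

theorem le_iff_div_le_of_affine {F Ec En Sc Sn t N : ℝ} (hE : Ec < En) (ht : 0 < t)
    (hN : N * t = Sn - Sc) :
    F * Ec + Sc ≤ F * En + Sn ↔ N / (Ec - En) ≤ F / t := by
  rw [div_le_iff_of_neg (sub_neg.2 hE), div_mul_eq_mul_div, div_le_iff₀ ht, hN]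
  constructor <;> intro h <;> linarith

theorem stmt_8_general (n : ℕ)
    (g0 Isp_s Isp_t m_sF m_tI m_req : ℝ)
    (hg0 : 0 < g0) (hIsps : 0 < Isp_s) (htI : 0 < m_tI)
    (Δv_sn Δv_sc Δv_tin Δv_tout : ℕ → ℝ)
    (hlt : (∑ j ∈ Finset.Icc 1 (n + 1), Δv_sc j) <
      (∑ j ∈ Finset.Icc 1 (n + 1), Δv_sn j))
    (m_sIn m_sIc α : ℝ)
    (hIn : m_sIn = m_sF *
        Real.exp ((∑ j ∈ Finset.Icc 1 (n + 1), Δv_sn j) / (Isp_s * g0)) +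
      ∑ j ∈ Finset.Icc 1 n,
        m_req * Real.exp ((∑ k ∈ Finset.Icc 1 j, Δv_sn k) / (Isp_s * g0)))
    (hIc : m_sIc = m_sF *
        Real.exp ((∑ j ∈ Finset.Icc 1 (n + 1), Δv_sc j) / (Isp_s * g0)) +
      ∑ j ∈ Finset.Icc 1 n,
        ((m_tI + m_req) * Real.exp (Δv_tout j / (Isp_t * g0)) -
          m_tI * Real.exp (-Δv_tin j / (Isp_t * g0))) *
          Real.exp ((∑ k ∈ Finset.Icc 1 j, Δv_sc k) / (Isp_s * g0)))
    (hα : α =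
      (∑ j ∈ Finset.Icc 1 n,
        ((m_req / m_tI) *
            Real.exp ((∑ k ∈ Finset.Icc 1 j, Δv_sn k) / (Isp_s * g0)) -
          ((1 + m_req / m_tI) * Real.exp (Δv_tout j / (Isp_t * g0)) -
              Real.exp (-Δv_tin j / (Isp_t * g0))) *
            Real.exp ((∑ k ∈ Finset.Icc 1 j, Δv_sc k) / (Isp_s * g0)))) /
      (Real.exp ((∑ j ∈ Finset.Icc 1 (n + 1), Δv_sc j) / (Isp_s * g0)) -
        Real.exp ((∑ j ∈ Finset.Icc 1 (n + 1), Δv_sn j) / (Isp_s * g0)))) :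
    m_sIc ≤ m_sIn ↔ α ≤ m_sF / m_tI := by
  have hexp_lt := Real.exp_lt_exp.2 (div_lt_div_of_pos_right hlt (mul_pos hIsps hg0))
  rw [hIn, hIc, hα]
  refine le_iff_div_le_of_affine hexp_lt htI ?_
  rw [Finset.sum_mul, ← Finset.sum_sub_distrib]
  refine Finset.sum_congr rfl fun j _ => ?_
  field_simp

/-- When the servicer's total Δv is strictly lower in the cooperative architecture, the
cooperative architecture needs no more initial servicer mass exactly when the
dry-servicer to initial-target mass ratio is at least the critical mass ratio α. -/
theorem stmt_8 (n : ℕ) (hn : 1 ≤ n)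
    (g0 Isp_s Isp_t m_sF m_tI m_req : ℝ)
    (hg0 : 0 < g0) (hIsps : 0 < Isp_s) (hIspt : 0 < Isp_t) (htI : 0 < m_tI)
    (Δv_sn Δv_sc Δv_tin Δv_tout : ℕ → ℝ)
    (hlt : (∑ j ∈ Finset.Icc 1 (n + 1), Δv_sc j) <
      (∑ j ∈ Finset.Icc 1 (n + 1), Δv_sn j))
    (m_sIn m_sIc α : ℝ)
    (hIn : m_sIn = m_sF *
        Real.exp ((∑ j ∈ Finset.Icc 1 (n + 1), Δv_sn j) / (Isp_s * g0)) +
      ∑ j ∈ Finset.Icc 1 n,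
        m_req * Real.exp ((∑ k ∈ Finset.Icc 1 j, Δv_sn k) / (Isp_s * g0)))
    (hIc : m_sIc = m_sF *
        Real.exp ((∑ j ∈ Finset.Icc 1 (n + 1), Δv_sc j) / (Isp_s * g0)) +
      ∑ j ∈ Finset.Icc 1 n,
        ((m_tI + m_req) * Real.exp (Δv_tout j / (Isp_t * g0)) -
          m_tI * Real.exp (-Δv_tin j / (Isp_t * g0))) *
          Real.exp ((∑ k ∈ Finset.Icc 1 j, Δv_sc k) / (Isp_s * g0)))
    (hα : α =
      (∑ j ∈ Finset.Icc 1 n,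
        ((m_req / m_tI) *
            Real.exp ((∑ k ∈ Finset.Icc 1 j, Δv_sn k) / (Isp_s * g0)) -
          ((1 + m_req / m_tI) * Real.exp (Δv_tout j / (Isp_t * g0)) -
              Real.exp (-Δv_tin j / (Isp_t * g0))) *
            Real.exp ((∑ k ∈ Finset.Icc 1 j, Δv_sc k) / (Isp_s * g0)))) /
      (Real.exp ((∑ j ∈ Finset.Icc 1 (n + 1), Δv_sc j) / (Isp_s * g0)) -
        Real.exp ((∑ j ∈ Finset.Icc 1 (n + 1), Δv_sn j) / (Isp_s * g0)))) :
    m_sIc ≤ m_sIn ↔ α ≤ m_sF / m_tI :=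
  stmt_8_general n g0 Isp_s Isp_t m_sF m_tI m_req hg0 hIsps htI Δv_sn Δv_sc Δv_tin Δv_tout hlt m_sIn
    m_sIc α hIn hIc hα
end

section
/- With the definitions below, m_tI > 0, Δv_sc(j) = 0 for all j = 1,…,n+1, and Σ_{j=1}^{n+1} Δv_sn(j) > 0, the inequality m_sIc ≤ m_sIn holds if and only if m_sF/m_tI ≥ α_AD, where α_AD := [Σ_{j=1}^{n} {(m_req/m_tI)·exp((Σ_{k=1}^{j} Δv_sn(k))/(Isp_s·g0)) − ((1 + m_req/m_tI)·exp(Δv_tout(j)/(Isp_t·g0)) − exp(−Δv_tin(j)/(Isp_t·g0)))}] / [1 − exp((Σ_{j=1}^{n+1} Δv_sn(j))/(Isp_s·g0))]. -/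
/-! With `Δv_sc ≡ 0` every cooperative exponential factor is `1`, so `m_sIc = m_sF + A` while
`m_sIn = m_sF * E + B`, where `A`, `B` are the refuel sums of the two architectures and `E > 1`
is the dry-mass growth factor of Architecture A. The inequality
`m_sF + A ≤ m_sF * E + B` is linear in `m_sF`, and dividing by `m_tI * (E - 1) > 0` turns it into
the threshold `(A - B) / (m_tI * (E - 1)) ≤ m_sF / m_tI`, which is `α_AD ≤ m_sF / m_tI`. -/

open Finset Real

theorem sum_Icc_one_eq_zero_of_le {M : Type*} [AddCommMonoid M] {f : ℕ → M} {N j : ℕ}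
    (hf : ∀ k, 1 ≤ k → k ≤ N → f k = 0) (hj : j ≤ N) : ∑ k ∈ Icc 1 j, f k = 0 :=
  sum_eq_zero fun k hk => hf k (mem_Icc.mp hk).1 ((mem_Icc.mp hk).2.trans hj)

theorem add_le_mul_add_iff_div_le {m F A B E : ℝ} (hm : 0 < m) (hE : 1 < E) :
    F + A ≤ F * E + B ↔ (B / m - A / m) / (1 - E) ≤ F / m := by
  rw [div_le_iff_of_neg (by linarith), ← sub_div, div_mul_eq_mul_div,
    div_le_div_iff_of_pos_right hm]
  constructor <;> intro h <;> linarith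

theorem sum_ratio_sub_eq_div_sub_div {ι : Type*} (s : Finset ι) {m r : ℝ} (hm : m ≠ 0)
    (e t u : ι → ℝ) :
    ∑ j ∈ s, (r / m * e j - ((1 + r / m) * t j - u j)) =
      (∑ j ∈ s, r * e j) / m - (∑ j ∈ s, ((m + r) * t j - m * u j)) / m := by
  rw [sum_div, sum_div, ← sum_sub_distrib]
  refine sum_congr rfl fun j _ => ?_
  field_simp

theorem stmt_9_general (n : ℕ)
    (g0 Isp_s Isp_t m_sF m_tI m_req : ℝ)
    (hg0 : 0 < g0) (hIsps : 0 < Isp_s) (htI : 0 < m_tI)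
    (Δv_sn Δv_sc Δv_tin Δv_tout : ℕ → ℝ)
    (hzero : ∀ j : ℕ, 1 ≤ j → j ≤ n + 1 → Δv_sc j = 0)
    (hpos : 0 < ∑ j ∈ Finset.Icc 1 (n + 1), Δv_sn j)
    (m_sIn m_sIc α_AD : ℝ)
    (hIn : m_sIn = m_sF *
        Real.exp ((∑ j ∈ Finset.Icc 1 (n + 1), Δv_sn j) / (Isp_s * g0)) +
      ∑ j ∈ Finset.Icc 1 n,
        m_req * Real.exp ((∑ k ∈ Finset.Icc 1 j, Δv_sn k) / (Isp_s * g0)))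
    (hIc : m_sIc = m_sF *
        Real.exp ((∑ j ∈ Finset.Icc 1 (n + 1), Δv_sc j) / (Isp_s * g0)) +
      ∑ j ∈ Finset.Icc 1 n,
        ((m_tI + m_req) * Real.exp (Δv_tout j / (Isp_t * g0)) -
          m_tI * Real.exp (-Δv_tin j / (Isp_t * g0))) *
          Real.exp ((∑ k ∈ Finset.Icc 1 j, Δv_sc k) / (Isp_s * g0)))
    (hα : α_AD =
      (∑ j ∈ Finset.Icc 1 n,
        ((m_req / m_tI) *
            Real.exp ((∑ k ∈ Finset.Icc 1 j, Δv_sn k) / (Isp_s * g0)) -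
          ((1 + m_req / m_tI) * Real.exp (Δv_tout j / (Isp_t * g0)) -
              Real.exp (-Δv_tin j / (Isp_t * g0))))) /
      (1 - Real.exp ((∑ j ∈ Finset.Icc 1 (n + 1), Δv_sn j) / (Isp_s * g0)))) :
    m_sIc ≤ m_sIn ↔ α_AD ≤ m_sF / m_tI := by
  have hsc : ∀ j ≤ n + 1, ∑ k ∈ Icc 1 j, Δv_sc k = 0 := fun j hj =>
    sum_Icc_one_eq_zero_of_le hzero hj
  have hIc' : m_sIc = m_sF + ∑ j ∈ Icc 1 n,
      ((m_tI + m_req) * exp (Δv_tout j / (Isp_t * g0)) -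
        m_tI * exp (-Δv_tin j / (Isp_t * g0))) := by
    rw [hIc, hsc _ le_rfl, zero_div, exp_zero, mul_one]
    refine congrArg _ (sum_congr rfl fun j hj => ?_)
    rw [hsc j ((mem_Icc.mp hj).2.trans n.le_succ), zero_div, exp_zero, mul_one]
  have hE : 1 < exp ((∑ j ∈ Icc 1 (n + 1), Δv_sn j) / (Isp_s * g0)) :=
    one_lt_exp_iff.mpr (by positivity)
  rw [hIc', hIn, hα, sum_ratio_sub_eq_div_sub_div _ htI.ne']
  exact add_le_mul_add_iff_div_le htI hE

/-- Fully cooperative "depot" Architecture D (the servicer does not maneuver, `Δv_sc ≡ 0`):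
the cooperative architecture needs no more initial servicer mass than the non-cooperative
Architecture A exactly when the dry-servicer to initial-target mass ratio is at least the
critical mass ratio `α_AD`. -/
theorem stmt_9 (n : ℕ) (hn : 1 ≤ n)
    (g0 Isp_s Isp_t m_sF m_tI m_req : ℝ)
    (hg0 : 0 < g0) (hIsps : 0 < Isp_s) (hIspt : 0 < Isp_t) (htI : 0 < m_tI)
    (Δv_sn Δv_sc Δv_tin Δv_tout : ℕ → ℝ)
    (hzero : ∀ j : ℕ, 1 ≤ j → j ≤ n + 1 → Δv_sc j = 0)
    (hpos : 0 < ∑ j ∈ Finset.Icc 1 (n + 1), Δv_sn j)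
    (m_sIn m_sIc α_AD : ℝ)
    (hIn : m_sIn = m_sF *
        Real.exp ((∑ j ∈ Finset.Icc 1 (n + 1), Δv_sn j) / (Isp_s * g0)) +
      ∑ j ∈ Finset.Icc 1 n,
        m_req * Real.exp ((∑ k ∈ Finset.Icc 1 j, Δv_sn k) / (Isp_s * g0)))
    (hIc : m_sIc = m_sF *
        Real.exp ((∑ j ∈ Finset.Icc 1 (n + 1), Δv_sc j) / (Isp_s * g0)) +
      ∑ j ∈ Finset.Icc 1 n,
        ((m_tI + m_req) * Real.exp (Δv_tout j / (Isp_t * g0)) -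
          m_tI * Real.exp (-Δv_tin j / (Isp_t * g0))) *
          Real.exp ((∑ k ∈ Finset.Icc 1 j, Δv_sc k) / (Isp_s * g0)))
    (hα : α_AD =
      (∑ j ∈ Finset.Icc 1 n,
        ((m_req / m_tI) *
            Real.exp ((∑ k ∈ Finset.Icc 1 j, Δv_sn k) / (Isp_s * g0)) -
          ((1 + m_req / m_tI) * Real.exp (Δv_tout j / (Isp_t * g0)) -
              Real.exp (-Δv_tin j / (Isp_t * g0))))) /
      (1 - Real.exp ((∑ j ∈ Finset.Icc 1 (n + 1), Δv_sn j) / (Isp_s * g0)))) :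
    m_sIc ≤ m_sIn ↔ α_AD ≤ m_sF / m_tI :=
  stmt_9_general n g0 Isp_s Isp_t m_sF m_tI m_req hg0 hIsps htI Δv_sn Δv_sc Δv_tin Δv_tout hzero
    hpos m_sIn m_sIc α_AD hIn hIc hα
end

section
/- With the definitions below, suppose m_tI > 0, m_req ≥ 0, Δv_sn(j) ≥ 0 for all j with Σ_{j=1}^{n+1} Δv_sn(j) > 0, Δv_tin(j) ≥ 0 and Δv_tout(j) ≥ 0 for all j. Let 0 < I1 < I2 be two servicer specific impulse values and assume α_AD(I1) > 0. Then α_AD(I1) < α_AD(I2); that is, the critical mass ratio α_AD, viewed as a function of the servicer specific impulse Isp_s, is strictly increasing on the region where it is positive. -/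
/-!
The denominator `1 - exp (S / (Isp_s * g0))` is negative and increases towards `0` with
`Isp_s`, while the numerator does not increase, since only its servicer terms depend on
`Isp_s`. Positivity of `α_AD (I1)` forces the numerator to be negative at `I1`, and a
negative numerator of growing absolute value over a negative denominator of shrinking
absolute value gives a larger quotient.
-/

open Real

theorem div_lt_div_of_le_of_lt_of_neg {K : Type*} [Field K] [LinearOrder K]
    [IsStrictOrderedRing K] {a b c d : K} (hba : b ≤ a) (hcd : c < d) (hd : d < 0)
    (hpos : 0 < a / c) : a / c < b / d := by
  have hc : c ≠ 0 := (hcd.trans hd).ne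
  have ha : a = a / c * c := (div_mul_cancel₀ a hc).symm
  rw [lt_div_iff_of_neg hd]
  nlinarith

theorem stmt_12_general (n : ℕ)
    (g0 Isp_t m_tI m_req : ℝ)
    (hg0 : 0 < g0) (htI : 0 < m_tI) (hreq : 0 ≤ m_req)
    (Δv_sn Δv_tin Δv_tout : ℕ → ℝ)
    (hsn : ∀ j : ℕ, 1 ≤ j → j ≤ n + 1 → 0 ≤ Δv_sn j)
    (hsnpos : 0 < ∑ j ∈ Finset.Icc 1 (n + 1), Δv_sn j)
    (αAD : ℝ → ℝ)
    (hα : ∀ Isp_s : ℝ, 0 < Isp_s → αAD Isp_s =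
      (∑ j ∈ Finset.Icc 1 n,
        ((m_req / m_tI) *
            Real.exp ((∑ k ∈ Finset.Icc 1 j, Δv_sn k) / (Isp_s * g0)) -
          ((1 + m_req / m_tI) * Real.exp (Δv_tout j / (Isp_t * g0)) -
              Real.exp (-Δv_tin j / (Isp_t * g0))))) /
      (1 - Real.exp ((∑ j ∈ Finset.Icc 1 (n + 1), Δv_sn j) / (Isp_s * g0))))
    (I1 I2 : ℝ) (hI1 : 0 < I1) (hI12 : I1 < I2) (hαpos : 0 < αAD I1) :
    αAD I1 < αAD I2 := by
  have hI2 : 0 < I2 := hI1.trans hI12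
  have hx : 0 < I1 * g0 := mul_pos hI1 hg0
  have hxy : I1 * g0 < I2 * g0 := mul_lt_mul_of_pos_right hI12 hg0
  rw [hα I1 hI1] at hαpos ⊢
  rw [hα I2 hI2]
  refine div_lt_div_of_le_of_lt_of_neg ?numerator ?denominator ?negative hαpos
  case numerator =>
    gcongr with j hj
    rw [Finset.mem_Icc] at hj
    exact Finset.sum_nonneg fun k hk => by
      rw [Finset.mem_Icc] at hk
      exact hsn k hk.1 (by omega)
  case denominator => gcongr
  case negative =>
    rw [sub_neg, one_lt_exp_iff]
    exact div_pos hsnpos (mul_pos hI2 hg0)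

/-- The critical mass ratio `α_AD` between the non-cooperative Architecture A and the
fully cooperative depot Architecture D, viewed as a function of the servicer specific
impulse `Isp_s`, is strictly increasing on the region where it is positive. -/
theorem stmt_12 (n : ℕ) (hn : 1 ≤ n)
    (g0 Isp_t m_tI m_req : ℝ)
    (hg0 : 0 < g0) (hIspt : 0 < Isp_t) (htI : 0 < m_tI) (hreq : 0 ≤ m_req)
    (Δv_sn Δv_tin Δv_tout : ℕ → ℝ)
    (hsn : ∀ j : ℕ, 1 ≤ j → j ≤ n + 1 → 0 ≤ Δv_sn j)
    (hsnpos : 0 < ∑ j ∈ Finset.Icc 1 (n + 1), Δv_sn j)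
    (htin : ∀ j : ℕ, 1 ≤ j → j ≤ n → 0 ≤ Δv_tin j)
    (htout : ∀ j : ℕ, 1 ≤ j → j ≤ n → 0 ≤ Δv_tout j)
    (αAD : ℝ → ℝ)
    (hα : ∀ Isp_s : ℝ, 0 < Isp_s → αAD Isp_s =
      (∑ j ∈ Finset.Icc 1 n,
        ((m_req / m_tI) *
            Real.exp ((∑ k ∈ Finset.Icc 1 j, Δv_sn k) / (Isp_s * g0)) -
          ((1 + m_req / m_tI) * Real.exp (Δv_tout j / (Isp_t * g0)) -
              Real.exp (-Δv_tin j / (Isp_t * g0))))) /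
      (1 - Real.exp ((∑ j ∈ Finset.Icc 1 (n + 1), Δv_sn j) / (Isp_s * g0))))
    (I1 I2 : ℝ) (hI1 : 0 < I1) (hI12 : I1 < I2) (hαpos : 0 < αAD I1) :
    αAD I1 < αAD I2 :=
  stmt_12_general n g0 Isp_t m_tI m_req hg0 htI hreq Δv_sn Δv_tin Δv_tout hsn hsnpos αAD hα I1 I2
    hI1 hI12 hαpos
end
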